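/- arXiv:1707.01157 — 2 statements merged into one kernel-verified Lean document; each statement's English description precedes it below -/
import Mathlib

section
/- For every infinite run M₀ →t₁→ M₁ →t₂→ M₂ → ⋯ of a net in Z_R HSA(I), there exist indices i < j such that M_i ≤ M_j componentwise and Compat_m(M_i, M_j) holds, where m is the maximum Index of the transitions t_{i+1}, …, t_j. -/
/-- An arc from a place to a transition: an ordinary weighted arc, an
inhibitor arc, a reset arc, or a transfer arc to the place `p'`. -/
inductive Arc (P : Type) where
  | weight : ℕ → Arc P
  | inhibitor : Arc P
  | reset : Arc P
  | transfer : P → Arc P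
  deriving DecidableEq

namespace Arc

/-- Whether the arc is an ordinary weighted arc, i.e. `F(p,t) ∈ ℕ`. -/
def isNat {P : Type} : Arc P → Bool
  | weight _ => true
  | _ => false

end Arc

/-- A Petri net with special arcs: places `Fin np`, transitions `Fin nt`,
pre-arcs (possibly special), post-arcs (ordinary) and an initial marking. -/
structure SNet where
  np : ℕ
  nt : ℕ
  pre : Fin np → Fin nt → Arc (Fin np)
  post : Fin nt → Fin np → ℕ
  init : Fin np → ℕ

namespace SNet

/-- A marking assigns a number of tokens to each place. -/
abbrev Marking (N : SNet) := Fin N.np → ℕ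

/-- A transition `t` is firable at `M` if `M p ≥ F(p,t)` for ordinary
pre-arcs and `M p = 0` for inhibitor pre-arcs. -/
def Firable (N : SNet) (M : N.Marking) (t : Fin N.nt) : Prop :=
  ∀ p, match N.pre p t with
    | Arc.weight n => n ≤ M p
    | Arc.inhibitor => M p = 0
    | _ => True

/-- The marking obtained by firing `t` at `M`: remove `F(p,t)` tokens for
ordinary arcs, empty reset places, move all tokens of transfer places to
their targets, then add `F(t,p)` tokens everywhere. -/
def fire (N : SNet) (M : N.Marking) (t : Fin N.nt) : N.Marking := fun p =>
  (match N.pre p t with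
    | Arc.weight n => M p - n
    | Arc.inhibitor => M p
    | Arc.reset => 0
    | Arc.transfer _ => 0)
  + (∑ q : Fin N.np, if N.pre q t = Arc.transfer p then M q else 0)
  + N.post t p

/-- `FireSeq N M ts M'` : firing the sequence `ts` from `M` is possible and
leads to `M'`. -/
def FireSeq (N : SNet) : N.Marking → List (Fin N.nt) → N.Marking → Prop
  | M, [], M' => M' = M
  | M, t :: ts, M' => Firable N M t ∧ FireSeq N (fire N M t) ts M'

/-- `M'` is reachable from `M` by firing some finite sequence of transitions. -/
def Reach (N : SNet) (M M' : N.Marking) : Prop := ∃ ts, FireSeq N M ts M'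

/-- The marking after the first `k` firings of the infinite sequence `seq`. -/
def markingAt (N : SNet) (M0 : N.Marking) (seq : ℕ → Fin N.nt) : ℕ → N.Marking
  | 0 => M0
  | k + 1 => fire N (markingAt N M0 seq k) (seq k)

/-- `N` has an infinite run from `M0`. -/
def InfRun (N : SNet) (M0 : N.Marking) : Prop :=
  ∃ seq : ℕ → Fin N.nt, ∀ k, N.Firable (N.markingAt M0 seq k) (seq k)

/-- A marking is deadlocked if no transition is firable at it. -/
def Deadlocked (N : SNet) (M : N.Marking) : Prop := ∀ t, ¬ N.Firable M t

/-- All special arcs respect the hierarchy `le`: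
`F(p,t) ∉ ℕ` and `q ⊑ p` imply `F(q,t) ∉ ℕ`. -/
def RespectsHierarchy (N : SNet) (le : Fin N.np → Fin N.np → Prop) : Prop :=
  ∀ p t, (N.pre p t).isNat = false → ∀ q, le q p → (N.pre q t).isNat = false

/-- The inhibitor arcs respect the hierarchy `le`:
`F(p,t) = I` and `q ⊑ p` imply `F(q,t) ∉ ℕ`. -/
def InhRespectsHierarchy (N : SNet) (le : Fin N.np → Fin N.np → Prop) : Prop :=
  ∀ p t, N.pre p t = Arc.inhibitor → ∀ q, le q p → (N.pre q t).isNat = false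

def NoTransfer (N : SNet) : Prop := ∀ p t p', N.pre p t ≠ Arc.transfer p'

def NoReset (N : SNet) : Prop := ∀ p t, N.pre p t ≠ Arc.reset

def NoInhibitor (N : SNet) : Prop := ∀ p t, N.pre p t ≠ Arc.inhibitor

/-- `Index(p)` : the number of places `q` with `q ⊑ p`. -/
noncomputable def placeIndex (N : SNet) (le : Fin N.np → Fin N.np → Prop)
    (p : Fin N.np) : ℕ :=
  Nat.card {q : Fin N.np // le q p}

/-- `Index(t)` : the maximum `Index(p)` over the inhibitor pre-places `p`
of `t` (0 if there are none). -/
noncomputable def transIndex (N : SNet) (le : Fin N.np → Fin N.np → Prop)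
    (t : Fin N.nt) : ℕ :=
  (Finset.univ.filter (fun p => N.pre p t = Arc.inhibitor)).sup (N.placeIndex le)

/-- `Compat_i(M₁, M₂)` : `M₁` and `M₂` agree on all places of index at most `i`. -/
def Compat (N : SNet) (le : Fin N.np → Fin N.np → Prop) (i : ℕ)
    (M₁ M₂ : N.Marking) : Prop :=
  ∀ p, N.placeIndex le p ≤ i → M₁ p = M₂ p

/-- The maximum `Index` of the transitions occurring in the run `ρ`. -/
noncomputable def runMaxIndex (N : SNet) (le : Fin N.np → Fin N.np → Prop)
    (ρ : List (Fin N.nt)) : ℕ :=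
  (ρ.map (N.transIndex le)).foldr max 0

/-- Membership in HSA(IR): only inhibitor and reset special arcs, all of
which respect some hierarchy. -/
def IsHSA_IR (N : SNet) : Prop :=
  ∃ le : Fin N.np → Fin N.np → Prop, IsLinearOrder (Fin N.np) le ∧
    N.RespectsHierarchy le ∧ N.NoTransfer

/-- Membership in HSA(T): only transfer special arcs, all of which respect
some hierarchy. -/
def IsHSA_T (N : SNet) : Prop :=
  ∃ le : Fin N.np → Fin N.np → Prop, IsLinearOrder (Fin N.np) le ∧
    N.RespectsHierarchy le ∧ N.NoReset ∧ N.NoInhibitor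

/-- Membership in HSA(IT): only inhibitor and transfer special arcs, all of
which respect some hierarchy. -/
def IsHSA_IT (N : SNet) : Prop :=
  ∃ le : Fin N.np → Fin N.np → Prop, IsLinearOrder (Fin N.np) le ∧
    N.RespectsHierarchy le ∧ N.NoReset

/-- Membership in HSA(IRcT): inhibitor, reset and transfer special arcs all
respect some hierarchy, and each transfer arc's target place is connected to
the transition by an ordinary arc. -/
def IsHSA_IRcT (N : SNet) : Prop :=
  ∃ le : Fin N.np → Fin N.np → Prop, IsLinearOrder (Fin N.np) le ∧
    N.RespectsHierarchy le ∧
    (∀ p t p', N.pre p t = Arc.transfer p' → (N.pre p' t).isNat = true)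

/-- The number of transitions having at least one reset pre-arc. -/
def resetTransCount (N : SNet) : ℕ :=
  (Finset.univ.filter (fun t : Fin N.nt => ∃ p, N.pre p t = Arc.reset)).card

/-- The number of transitions having at least one reset or transfer pre-arc. -/
def resetOrTransferTransCount (N : SNet) : ℕ :=
  (Finset.univ.filter (fun t : Fin N.nt =>
    ∃ p, N.pre p t = Arc.reset ∨ ∃ p', N.pre p t = Arc.transfer p')).card

/-- The number of transitions having at least one special (non-ordinary) pre-arc. -/
def specialTransCount (N : SNet) : ℕ :=
  (Finset.univ.filter (fun t : Fin N.nt => ∃ p, (N.pre p t).isNat = false)).card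

/-- The number of reset arcs. -/
def resetArcCount (N : SNet) : ℕ :=
  (Finset.univ.filter
    (fun pt : Fin N.np × Fin N.nt => N.pre pt.1 pt.2 = Arc.reset)).card

/-- The number of inhibitor arcs. -/
def inhibitorArcCount (N : SNet) : ℕ :=
  (Finset.univ.filter
    (fun pt : Fin N.np × Fin N.nt => N.pre pt.1 pt.2 = Arc.inhibitor)).card

/-- The number of transfer arcs. -/
def transferArcCount (N : SNet) : ℕ :=
  (Finset.univ.filter
    (fun pt : Fin N.np × Fin N.nt => ∃ p', N.pre pt.1 pt.2 = Arc.transfer p')).card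

/-- The number of places having at least one inhibitor arc out of them. -/
def inhibitorPlaceCount (N : SNet) : ℕ :=
  (Finset.univ.filter (fun p : Fin N.np => ∃ t, N.pre p t = Arc.inhibitor)).card

end SNet

/-! Let `t` be, among the transitions fired infinitely often, one of maximal index; from some
point on only such transitions fire, so every later segment of the run has maximal index
`Index(t)`. Every place `p` with `Index(p) ≤ Index(t)` lies below an inhibitor pre-place of
`t`, so by the hierarchy it is an inhibitor or reset pre-place of `t`: it is empty before `t`
fires and holds exactly `F(t, p)` tokens afterwards. Hence all markings reached right after a
late firing of `t` are `Index(t)`-compatible, and Dickson's lemma picks two of them that are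
ordered. -/

open Filter

theorem Filter.exists_frequently_eq_and_eventually_le {ι α β : Type*} [Finite α] [LinearOrder β]
    {l : Filter ι} [l.NeBot] (u : ι → α) (f : α → β) :
    ∃ a, (∃ᶠ i in l, u i = a) ∧ ∀ᶠ i in l, f (u i) ≤ f a := by
  set S := {a | ∃ᶠ i in l, u i = a}
  have hS : ∀ᶠ i in l, u i ∈ S := by
    have : ∀ᶠ i in l, ∀ a ∉ S, u i ≠ a :=
      eventually_all.2 fun a => by
        by_cases ha : a ∈ S
        · exact .of_forall fun _ h => absurd ha h
        · exact (not_frequently.1 ha).mono fun _ hi _ => hi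
    exact this.mono fun i hi => by_contra fun h => hi _ h rfl
  obtain ⟨i, hi⟩ := hS.exists
  obtain ⟨a, haS, hmax⟩ := Set.exists_max_image S f (Set.toFinite S) ⟨u i, hi⟩
  exact ⟨a, haS, hS.mono fun i hi => hmax _ hi⟩

theorem Filter.Frequently.exists_lt_and_le {α : Type*} [LE α] [WellQuasiOrderedLE α]
    {P : ℕ → Prop} (hP : ∃ᶠ k in atTop, P k) (g : ℕ → α) :
    ∃ a b, a < b ∧ P a ∧ P b ∧ g a ≤ g b := by
  obtain ⟨φ, hφ, hPφ⟩ := extraction_of_frequently_atTop hP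
  obtain ⟨m, n, hmn, hle⟩ := wellQuasiOrdered_le (g ∘ φ)
  exact ⟨φ m, φ n, hφ hmn, hPφ m, hPφ n, hle⟩

namespace SNet

variable {N : SNet} {le : Fin N.np → Fin N.np → Prop}

theorem placeIndex_pos [Std.Refl le] (p : Fin N.np) : 0 < N.placeIndex le p :=
  have : Nonempty {q // le q p} := ⟨⟨p, refl_of le p⟩⟩
  Nat.card_pos

theorem le_of_placeIndex_le [Std.Refl le] [Std.Total le] [IsTrans _ le] {p q : Fin N.np}
    (h : N.placeIndex le p ≤ N.placeIndex le q) : le p q := by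
  by_contra hpq
  have hqp : le q p := (total_of le p q).resolve_left hpq
  have hss : {x | le x q} ⊂ {x | le x p} :=
    ⟨fun x hx => trans_of le hx hqp, fun h' => hpq (h' (refl_of le p))⟩
  have hcard (r : Fin N.np) : N.placeIndex le r = {x | le x r}.ncard := Nat.card_coe_set_eq _
  rw [hcard, hcard] at h
  exact (Set.ncard_lt_ncard hss).not_ge h

theorem exists_inhibitor_of_placeIndex_le_transIndex [Std.Refl le] [Std.Total le]
    [IsTrans _ le] {p : Fin N.np} {t : Fin N.nt}
    (hp : N.placeIndex le p ≤ N.transIndex le t) :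
    ∃ q, N.pre q t = Arc.inhibitor ∧ le p q := by
  obtain ⟨q, hq, hpq⟩ := (Finset.le_sup_iff (placeIndex_pos p)).1 hp
  exact ⟨q, (Finset.mem_filter.1 hq).2, le_of_placeIndex_le hpq⟩

theorem fire_apply_of_le_inhibitor (hresp : N.InhRespectsHierarchy le) (hnt : N.NoTransfer)
    {M : N.Marking} {t : Fin N.nt} (hf : N.Firable M t) {p q : Fin N.np}
    (hq : N.pre q t = Arc.inhibitor) (hpq : le p q) :
    N.fire M t p = N.post t p := by
  have hin : (∑ q : Fin N.np, if N.pre q t = Arc.transfer p then M q else 0) = 0 :=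
    Finset.sum_eq_zero fun x _ => if_neg (hnt x t p)
  have hspecial := hresp q t hq p hpq
  have hfp := hf p
  rw [fire, hin]
  cases h : N.pre p t with
  | weight n => simp [h, Arc.isNat] at hspecial
  | inhibitor => simp only [h] at hfp ⊢; rw [hfp, add_zero, zero_add]
  | reset => rw [add_zero, zero_add]
  | transfer p' => exact absurd h (hnt p t p')

theorem fire_apply_of_placeIndex_le_transIndex [IsLinearOrder _ le]
    (hresp : N.InhRespectsHierarchy le) (hnt : N.NoTransfer) {M : N.Marking} {t : Fin N.nt}
    (hf : N.Firable M t) {p : Fin N.np} (hp : N.placeIndex le p ≤ N.transIndex le t) :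
    N.fire M t p = N.post t p :=
  let ⟨_, hq, hpq⟩ := exists_inhibitor_of_placeIndex_le_transIndex hp
  fire_apply_of_le_inhibitor hresp hnt hf hq hpq

end SNet

/-- along every infinite run of a `Z_R HSA(I)` net there are
positions `i < j` with `M_i ≤ M_j` and `Compat_m(M_i, M_j)`, where `m` is
the maximum index of the transitions `t_{i+1}, …, t_j`. -/
theorem zr_hsa_i_infinite_run_subsumed_pair (N : SNet)
    (le : Fin N.np → Fin N.np → Prop) (hlin : IsLinearOrder (Fin N.np) le)
    (hresp : N.InhRespectsHierarchy le) (hnt : N.NoTransfer)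
    (seq : ℕ → Fin N.nt)
    (hrun : ∀ k, N.Firable (N.markingAt N.init seq k) (seq k)) :
    ∃ i j : ℕ, i < j ∧
      (∀ p, N.markingAt N.init seq i p ≤ N.markingAt N.init seq j p) ∧
      N.Compat le ((Finset.Ico i j).sup (fun k => N.transIndex le (seq k)))
        (N.markingAt N.init seq i) (N.markingAt N.init seq j) := by
  have := hlin
  set M := N.markingAt N.init seq
  obtain ⟨t, hfreq, hev⟩ :=
    exists_frequently_eq_and_eventually_le (l := atTop) seq (N.transIndex le)
  obtain ⟨K, hK⟩ := eventually_atTop.1 hev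
  obtain ⟨a, b, hab, ⟨hta, hKa⟩, ⟨htb, -⟩, hle⟩ :=
    (hfreq.and_eventually (eventually_ge_atTop K)).exists_lt_and_le (fun k => M (k + 1))
  refine ⟨a + 1, b + 1, by omega, hle, fun p hp => ?_⟩
  have hpt : N.placeIndex le p ≤ N.transIndex le t :=
    hp.trans (Finset.sup_le fun k hk => hK k (by grind))
  have hafter {k} (hk : seq k = t) : M (k + 1) p = N.post t p := by
    subst hk
    exact SNet.fire_apply_of_placeIndex_le_transIndex hresp hnt (hrun k) hpt
  rw [hafter hta, hafter htb]
end

section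
/- Let N be a net in Z_R HSA(I), let M₁ and M₂ be markings with M₁ ≤ M₂ componentwise, and let i ∈ ℕ be such that Compat_i(M₁, M₂) holds. Then for any finite sequence ρ of transitions all of Index at most i: if ρ can be fired from M₁ reaching a marking M₁', then ρ can be fired from M₂ reaching a marking M₂' with M₁' ≤ M₂' componentwise and Compat_i(M₁', M₂'). -/
/-!
Inhibitor arcs of a transition of index at most `i` only test places of index at most `i`,
on which the two markings agree, so such a transition is firable from the larger marking
whenever it is firable from the smaller one. Firing is monotone and, without transfer arcs,
acts placewise, so both `≤` and `Compat_i` are preserved, and induction on the run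
concludes.
-/

namespace SNet

variable {N : SNet}

theorem placeIndex_le_transIndex {le : Fin N.np → Fin N.np → Prop} {p : Fin N.np}
    {t : Fin N.nt} (hp : N.pre p t = Arc.inhibitor) :
    N.placeIndex le p ≤ N.transIndex le t :=
  Finset.le_sup (f := N.placeIndex le) (Finset.mem_filter.mpr ⟨Finset.mem_univ p, hp⟩)

theorem Firable.of_le_of_compat {le : Fin N.np → Fin N.np → Prop} {i : ℕ}
    {M₁ M₂ : N.Marking} {t : Fin N.nt} (hle : ∀ p, M₁ p ≤ M₂ p)
    (hcompat : N.Compat le i M₁ M₂) (hti : N.transIndex le t ≤ i)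
    (hfir : N.Firable M₁ t) : N.Firable M₂ t := by
  intro p
  have hp := hfir p
  cases hpre : N.pre p t with
  | weight n =>
    simp only [hpre] at hp ⊢
    exact hp.trans (hle p)
  | inhibitor =>
    simp only [hpre] at hp ⊢
    rwa [← hcompat p ((placeIndex_le_transIndex hpre).trans hti)]
  | reset => trivial
  | transfer _ => trivial

theorem fire_mono {M₁ M₂ : N.Marking} (t : Fin N.nt) (hle : ∀ p, M₁ p ≤ M₂ p) (p : Fin N.np) :
    N.fire M₁ t p ≤ N.fire M₂ t p := by
  have hinflow : (∑ q, if N.pre q t = Arc.transfer p then M₁ q else 0) ≤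
      ∑ q, if N.pre q t = Arc.transfer p then M₂ q else 0 :=
    Finset.sum_le_sum fun q _ => by split_ifs <;> simp [hle q]
  unfold fire
  gcongr
  cases N.pre p t with
  | weight n => exact Nat.sub_le_sub_right (hle p) n
  | inhibitor => exact hle p
  | reset => rfl
  | transfer _ => rfl

theorem fire_apply_eq_of_noTransfer (hnt : N.NoTransfer) {M₁ M₂ : N.Marking}
    (t : Fin N.nt) {p : Fin N.np} (hp : M₁ p = M₂ p) : N.fire M₁ t p = N.fire M₂ t p := by
  have hinflow : ∀ M : N.Marking, (∑ q, if N.pre q t = Arc.transfer p then M q else 0) = 0 :=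
    fun M => Finset.sum_eq_zero fun q _ => if_neg (hnt q t p)
  simp only [fire, hinflow, hp]

theorem Compat.fire (hnt : N.NoTransfer) {le : Fin N.np → Fin N.np → Prop} {i : ℕ}
    {M₁ M₂ : N.Marking} (hcompat : N.Compat le i M₁ M₂) (t : Fin N.nt) :
    N.Compat le i (N.fire M₁ t) (N.fire M₂ t) :=
  fun p hp => fire_apply_eq_of_noTransfer hnt t (hcompat p hp)

end SNet

theorem zr_hsa_i_compat_monotone_general (N : SNet)
    (le : Fin N.np → Fin N.np → Prop) (hnt : N.NoTransfer)
    (M₁ M₂ : N.Marking) (hle : ∀ p, M₁ p ≤ M₂ p) (i : ℕ)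
    (hcompat : N.Compat le i M₁ M₂) (ρ : List (Fin N.nt))
    (hρ : ∀ t ∈ ρ, N.transIndex le t ≤ i)
    (M₁' : N.Marking) (h₁ : N.FireSeq M₁ ρ M₁') :
    ∃ M₂' : N.Marking, N.FireSeq M₂ ρ M₂' ∧ (∀ p, M₁' p ≤ M₂' p) ∧
      N.Compat le i M₁' M₂' := by
  induction ρ generalizing M₁ M₂ with
  | nil =>
    subst h₁
    exact ⟨M₂, rfl, hle, hcompat⟩
  | cons t ts ih =>
    obtain ⟨hfir, hseq⟩ := h₁
    obtain ⟨M₂', hseq₂, hle', hcompat'⟩ :=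
      ih (N.fire M₁ t) (N.fire M₂ t) (SNet.fire_mono t hle) (hcompat.fire hnt t)
        (fun t' ht' => hρ t' (List.mem_cons_of_mem t ht')) hseq
    exact ⟨M₂', ⟨hfir.of_le_of_compat hle hcompat (hρ t List.mem_cons_self), hseq₂⟩,
      hle', hcompat'⟩

/-- in a `Z_R HSA(I)` net, if `M₁ ≤ M₂` and `Compat_i(M₁, M₂)`,
then any run over transitions of index at most `i` firable from `M₁` is also
firable from `M₂`, and the resulting markings again satisfy `≤` and
`Compat_i`. -/
theorem zr_hsa_i_compat_monotone (N : SNet)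
    (le : Fin N.np → Fin N.np → Prop) (hlin : IsLinearOrder (Fin N.np) le)
    (hresp : N.InhRespectsHierarchy le) (hnt : N.NoTransfer)
    (M₁ M₂ : N.Marking) (hle : ∀ p, M₁ p ≤ M₂ p) (i : ℕ)
    (hcompat : N.Compat le i M₁ M₂) (ρ : List (Fin N.nt))
    (hρ : ∀ t ∈ ρ, N.transIndex le t ≤ i)
    (M₁' : N.Marking) (h₁ : N.FireSeq M₁ ρ M₁') :
    ∃ M₂' : N.Marking, N.FireSeq M₂ ρ M₂' ∧ (∀ p, M₁' p ≤ M₂' p) ∧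
      N.Compat le i M₁' M₂' :=
  zr_hsa_i_compat_monotone_general N le hnt M₁ M₂ hle i hcompat ρ hρ M₁' h₁
end
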